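/- arXiv:2601.16743 — 8 statements merged into one kernel-verified Lean document; each statement's English description precedes it below -/
import Mathlib

section
/- For all β > 0 and m > 0, setting ω(l,β) = (2l−1)π/β for l ∈ ℤ, the series Σ_{l∈ℤ} ω(l,β)²/(m² + ω(l,β)²)² converges and Σ_{l∈ℤ} ω(l,β)²/(m² + ω(l,β)²)² ≤ β²/4. -/
/-!
Since `m² ≥ 0`, each term `ω²/(m² + ω²)²` is at most `1/ω² = (β/π)²/(2l-1)²`, and
`Σ_{l ∈ ℤ} 1/(2l-1)² = 2 Σ_{k ≥ 0} 1/(2k+1)² = 2 · (3/4) ζ(2) = π²/4`.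
-/

open Real

lemma hasSum_one_div_two_mul_add_one_sq :
    HasSum (fun k : ℕ => 1 / (2 * k + 1 : ℝ) ^ 2) (π ^ 2 / 8) := by
  let f : ℕ → ℝ := fun n => 1 / (n : ℝ) ^ 2
  have heven : HasSum (fun k => f (2 * k)) (π ^ 2 / 24) := by
    have hf : (fun k => f (2 * k)) = fun k => 1 / 4 * f k := by
      ext k
      simp only [f]
      push_cast
      ring
    rw [hf, show π ^ 2 / 24 = 1 / 4 * (π ^ 2 / 6) by ring]
    exact hasSum_zeta_two.mul_left _
  have hodd : Summable (fun k => f (2 * k + 1)) :=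
    hasSum_zeta_two.summable.comp_injective fun a b h => by simpa using h
  have htot : π ^ 2 / 24 + ∑' k, f (2 * k + 1) = π ^ 2 / 6 :=
    (heven.even_add_odd hodd.hasSum).unique hasSum_zeta_two
  convert hodd.hasSum using 1
  · ext k
    simp [f]
  · linarith

lemma hasSum_int_one_div_two_mul_sub_one_sq :
    HasSum (fun l : ℤ => 1 / (2 * l - 1 : ℝ) ^ 2) (π ^ 2 / 4) := by
  have h := hasSum_one_div_two_mul_add_one_sq
  -- after the shift `l ↦ l + 1`, both `l ≥ 0` and `l < 0` run through `1/(2k+1)²`, `k ∈ ℕ`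
  rw [← (Equiv.addRight (1 : ℤ)).hasSum_iff, show π ^ 2 / 4 = π ^ 2 / 8 + π ^ 2 / 8 by ring]
  refine HasSum.of_nat_of_neg_add_one ?_ ?_ <;>
  · convert h using 2 with n
    simp
    ring

lemma div_add_sq_le_inv {c x : ℝ} (hc : 0 ≤ c) (hx : 0 ≤ x) : x / (c + x) ^ 2 ≤ x⁻¹ := by
  rcases hx.eq_or_lt with rfl | hx
  · simp
  rw [div_le_iff₀ (by positivity), ← div_eq_inv_mul, le_div_iff₀ hx]
  nlinarith

theorem stmt2_general (β m : ℝ) :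
    Summable (fun l : ℤ => ((2 * (l : ℝ) - 1) * Real.pi / β) ^ 2 /
      (m ^ 2 + ((2 * (l : ℝ) - 1) * Real.pi / β) ^ 2) ^ 2) ∧
    (∑' l : ℤ, ((2 * (l : ℝ) - 1) * Real.pi / β) ^ 2 /
      (m ^ 2 + ((2 * (l : ℝ) - 1) * Real.pi / β) ^ 2) ^ 2) ≤ β ^ 2 / 4 := by
  have hdom : HasSum (fun l : ℤ => (β / π) ^ 2 * (1 / (2 * l - 1) ^ 2)) (β ^ 2 / 4) := by
    rw [show β ^ 2 / 4 = (β / π) ^ 2 * (π ^ 2 / 4) by field_simp]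
    exact hasSum_int_one_div_two_mul_sub_one_sq.mul_left _
  have hle (l : ℤ) : ((2 * (l : ℝ) - 1) * π / β) ^ 2 /
      (m ^ 2 + ((2 * (l : ℝ) - 1) * π / β) ^ 2) ^ 2 ≤ (β / π) ^ 2 * (1 / (2 * l - 1) ^ 2) := by
    refine (div_add_sq_le_inv (sq_nonneg m) (sq_nonneg _)).trans_eq ?_
    rw [← inv_pow, inv_div]
    generalize (2 * (l : ℝ) - 1) = x
    ring
  have hsum := hdom.summable.of_nonneg_of_le (fun l => by positivity) hle
  exact ⟨hsum, hdom.tsum_eq ▸ hsum.tsum_le_tsum hle hdom.summable⟩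

/-- For `β > 0`, `m > 0` and fermionic Matsubara frequencies `ω(l,β) = (2l−1)π/β`, the series
`Σ_{l ∈ ℤ} ω(l,β)²/(m² + ω(l,β)²)²` converges and is bounded by `β²/4`. -/
theorem stmt2 (β m : ℝ) (hβ : 0 < β) (hm : 0 < m) :
    Summable (fun l : ℤ => ((2 * (l : ℝ) - 1) * Real.pi / β) ^ 2 /
      (m ^ 2 + ((2 * (l : ℝ) - 1) * Real.pi / β) ^ 2) ^ 2) ∧
    (∑' l : ℤ, ((2 * (l : ℝ) - 1) * Real.pi / β) ^ 2 /
      (m ^ 2 + ((2 * (l : ℝ) - 1) * Real.pi / β) ^ 2) ^ 2) ≤ β ^ 2 / 4 :=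
  stmt2_general β m
end

section
/- For every a > 0, one has Σ_{n∈ℤ} e^{−a(n−1/2)²} = √(π/a) · (1 + 2 Σ_{n=1}^∞ (−1)ⁿ e^{−π²n²/a}), both series being absolutely convergent. -/
/-!
The series `∑ₙ e^{-a(n-x)²}` is Mathlib's `evenKernel x (a/π)`, and `∑ₙ cos(2πxn) e^{-π²n²/a}` is
`cosKernel x (π/a)`. Their functional equation, which comes from the Jacobi transformation of
`jacobiTheta₂`, is Poisson summation for the shifted Gaussian; at `x = 1/2` the cosines are the
signs `(-1)ⁿ`.
-/

open Real HurwitzZeta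

lemma hasSum_int_exp_neg_mul_sub_sq (x : ℝ) {a : ℝ} (ha : 0 < a) :
    HasSum (fun n : ℤ => rexp (-a * ((n : ℝ) - x) ^ 2)) (evenKernel x (a / π)) := by
  rw [← evenKernel_neg]
  refine (hasSum_int_evenKernel (-x) (div_pos ha pi_pos)).congr_fun fun n => ?_
  field_simp [pi_ne_zero]
  ring_nf

lemma hasSum_nat_cos_mul_exp_neg_sq (x : ℝ) {a : ℝ} (ha : 0 < a) :
    HasSum (fun n : ℕ => cos (2 * π * x * (n + 1)) * rexp (-π ^ 2 * ((n : ℝ) + 1) ^ 2 / a))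
      ((cosKernel x (π / a) - 1) / 2) := by
  refine ((hasSum_nat_cosKernel₀ x (div_pos pi_pos ha)).div_const 2).congr_fun fun n => ?_
  rw [show -π * ((n : ℝ) + 1) ^ 2 * (π / a) = -π ^ 2 * ((n : ℝ) + 1) ^ 2 / a by ring]
  ring

theorem tsum_int_exp_neg_mul_sub_sq (x : ℝ) {a : ℝ} (ha : 0 < a) :
    ∑' n : ℤ, rexp (-a * ((n : ℝ) - x) ^ 2) =
      √(π / a) *
        (1 + 2 * ∑' n : ℕ, cos (2 * π * x * (n + 1)) * rexp (-π ^ 2 * ((n : ℝ) + 1) ^ 2 / a)) := by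
  rw [(hasSum_int_exp_neg_mul_sub_sq x ha).tsum_eq, (hasSum_nat_cos_mul_exp_neg_sq x ha).tsum_eq,
    evenKernel_functional_equation, one_div_div, ← sqrt_eq_rpow, one_div, ← sqrt_inv, inv_div]
  ring

/-- Poisson summation formula for the half-integer-shifted Gaussian theta series: for `a > 0`,
`Σ_{n∈ℤ} e^{−a(n−1/2)²} = √(π/a) · (1 + 2 Σ_{n=1}^∞ (−1)ⁿ e^{−π²n²/a})`, both series being
absolutely convergent. -/
theorem stmt4 (a : ℝ) (ha : 0 < a) :
    Summable (fun n : ℤ => Real.exp (-a * ((n : ℝ) - 1 / 2) ^ 2)) ∧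
    Summable (fun n : ℕ =>
      (-1 : ℝ) ^ (n + 1) * Real.exp (-Real.pi ^ 2 * ((n : ℝ) + 1) ^ 2 / a)) ∧
    (∑' n : ℤ, Real.exp (-a * ((n : ℝ) - 1 / 2) ^ 2)) =
      Real.sqrt (Real.pi / a) *
        (1 + 2 * ∑' n : ℕ,
          (-1 : ℝ) ^ (n + 1) * Real.exp (-Real.pi ^ 2 * ((n : ℝ) + 1) ^ 2 / a)) := by
  have hsigns (n : ℕ) : cos (2 * π * (1 / 2) * (n + 1)) = (-1) ^ (n + 1) := by
    rw [← cos_nat_mul_pi]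
    push_cast
    ring_nf
  simp only [← hsigns]
  exact ⟨(hasSum_int_exp_neg_mul_sub_sq _ ha).summable,
    (hasSum_nat_cos_mul_exp_neg_sq _ ha).summable, tsum_int_exp_neg_mul_sub_sq _ ha⟩
end

section
/- For all α > 0, γ > 0 and every real ν, the integral ∫₀^∞ x^{ν−1} e^{−α/x − γx} dx is finite and equals 2(α/γ)^{ν/2} ∫₀^∞ e^{−2√(αγ)·cosh t} cosh(νt) dt, where the integral on the right is also finite. -/
/-!
Substituting `x = √(α/γ) eᵗ` turns `α/x + γx` into `2√(αγ) cosh t` and `x^(ν-1) dx` into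
`(α/γ)^(ν/2) e^(νt) dt`, so the left side is `(α/γ)^(ν/2) ∫_ℝ e^(νt - 2√(αγ) cosh t) dt`.
Averaging this integral with its reflection `t ↦ -t` replaces `e^(νt)` by `cosh (νt)`; the
integrand becomes even, and its integral over `ℝ` is twice the one over `(0, ∞)`.
Integrability comes from `cosh t ≥ 1 + t²/2`, which gives a Gaussian majorant.
-/

open MeasureTheory Real Set

theorem Real.one_add_sq_div_two_le_cosh (t : ℝ) : 1 + t ^ 2 / 2 ≤ cosh t := by
  have hdouble := cosh_two_mul (t / 2)
  rw [mul_div_cancel₀ t two_ne_zero, cosh_sq'] at hdouble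
  have hsinh : |t / 2| ≤ |sinh (t / 2)| := by
    rw [abs_sinh]
    exact self_le_sinh_iff.2 (abs_nonneg _)
  nlinarith [sq_abs (t / 2), sq_abs (sinh (t / 2)), abs_nonneg (t / 2)]

theorem integrable_exp_mul_sub_mul_cosh {b : ℝ} (hb : 0 < b) (μ : ℝ) :
    Integrable fun t : ℝ => exp (μ * t - b * cosh t) := by
  refine ((integrable_exp_neg_mul_sq (by positivity : 0 < b / 4)).const_mul
    (exp (μ ^ 2 / b))).mono' (by fun_prop) (Filter.Eventually.of_forall fun t => ?_)
  rw [norm_of_nonneg (exp_pos _).le, ← exp_add, exp_le_exp]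
  have hamgm : μ * t ≤ μ ^ 2 / b + b / 4 * t ^ 2 := by
    rw [div_add' _ _ _ hb.ne', le_div_iff₀ hb]
    nlinarith [sq_nonneg (b * t / 2 - μ)]
  nlinarith [one_add_sq_div_two_le_cosh t]

theorem exp_mul_sub_mul_cosh_add_exp_neg_mul_sub_mul_cosh (b ν t : ℝ) :
    exp (ν * t - b * cosh t) + exp (-ν * t - b * cosh t) =
      2 * (exp (-b * cosh t) * cosh (ν * t)) := by
  simp only [sub_eq_add_neg, exp_add, cosh_eq (ν * t), neg_mul]
  ring

theorem integrable_exp_neg_mul_cosh_mul_cosh {b : ℝ} (hb : 0 < b) (ν : ℝ) :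
    Integrable fun t : ℝ => exp (-b * cosh t) * cosh (ν * t) := by
  have hsum := ((integrable_exp_mul_sub_mul_cosh hb ν).add
    (integrable_exp_mul_sub_mul_cosh hb (-ν))).div_const 2
  refine hsum.congr (Filter.Eventually.of_forall fun t => ?_)
  simp only [Pi.add_apply, exp_mul_sub_mul_cosh_add_exp_neg_mul_sub_mul_cosh]
  ring

theorem integral_exp_mul_sub_mul_cosh {b : ℝ} (hb : 0 < b) (ν : ℝ) :
    ∫ t, exp (ν * t - b * cosh t) = 2 * ∫ t in Ioi 0, exp (-b * cosh t) * cosh (ν * t) := by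
  have hreflect : ∫ t, exp (-ν * t - b * cosh t) = ∫ t, exp (ν * t - b * cosh t) := by
    rw [← integral_neg_eq_self]
    simp only [cosh_neg, neg_mul_neg]
  have heven : ∀ t, exp (-b * cosh |t|) * cosh (ν * |t|) = exp (-b * cosh t) * cosh (ν * t) := by
    intro t
    rw [cosh_abs, ← cosh_abs (ν * |t|), ← cosh_abs (ν * t), abs_mul, abs_mul, abs_abs]
  calc ∫ t, exp (ν * t - b * cosh t)
      = (∫ t, (exp (ν * t - b * cosh t) + exp (-ν * t - b * cosh t))) / 2 := by
        rw [integral_add (integrable_exp_mul_sub_mul_cosh hb ν)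
          (integrable_exp_mul_sub_mul_cosh hb (-ν)), hreflect]
        ring
    _ = ∫ t, exp (-b * cosh |t|) * cosh (ν * |t|) := by
        simp only [exp_mul_sub_mul_cosh_add_exp_neg_mul_sub_mul_cosh, integral_const_mul, heven]
        ring
    _ = 2 * ∫ t in Ioi 0, exp (-b * cosh t) * cosh (ν * t) :=
        integral_comp_abs (f := fun t => exp (-b * cosh t) * cosh (ν * t))

section MulExpSubstitution

variable {E : Type*} [NormedAddCommGroup E] [NormedSpace ℝ E] {c : ℝ}

theorem image_univ_const_mul_exp (hc : 0 < c) : (fun t => c * exp t) '' univ = Ioi 0 := by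
  rw [image_univ, show (fun t => c * exp t) = (c * ·) ∘ exp from rfl, range_comp, range_exp,
    image_const_mul_Ioi_zero hc]

theorem hasDerivWithinAt_const_mul_exp (c t : ℝ) :
    HasDerivWithinAt (fun t => c * exp t) (c * exp t) univ t :=
  ((hasDerivAt_exp t).const_mul c).hasDerivWithinAt

theorem injOn_const_mul_exp (hc : 0 < c) : InjOn (fun t => c * exp t) univ :=
  fun _ _ _ _ h => exp_injective (mul_left_cancel₀ hc.ne' h)

theorem integrableOn_Ioi_zero_iff_integrable_comp_mul_exp (hc : 0 < c) (g : ℝ → E) :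
    IntegrableOn g (Ioi 0) ↔ Integrable fun t => (c * exp t) • g (c * exp t) := by
  rw [← image_univ_const_mul_exp hc, integrableOn_image_iff_integrableOn_abs_deriv_smul
    MeasurableSet.univ (fun t _ => hasDerivWithinAt_const_mul_exp c t) (injOn_const_mul_exp hc),
    integrableOn_univ]
  simp only [abs_of_pos (mul_pos hc (exp_pos _))]

theorem integral_Ioi_zero_eq_integral_comp_mul_exp (hc : 0 < c) (g : ℝ → E) :
    ∫ x in Ioi 0, g x = ∫ t, (c * exp t) • g (c * exp t) := by
  rw [← image_univ_const_mul_exp hc, integral_image_eq_integral_abs_deriv_smul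
    MeasurableSet.univ (fun t _ => hasDerivWithinAt_const_mul_exp c t) (injOn_const_mul_exp hc),
    setIntegral_univ]
  simp only [abs_of_pos (mul_pos hc (exp_pos _))]

end MulExpSubstitution

theorem mul_exp_mul_rpow_mul_exp_neg_div_sub_mul {α γ c s : ℝ} (hc : 0 < c) (hα : α = s * c)
    (hγ : γ * c = s) (ν t : ℝ) :
    c * exp t * ((c * exp t) ^ (ν - 1) * exp (-α / (c * exp t) - γ * (c * exp t))) =
      c ^ ν * exp (ν * t - 2 * s * cosh t) := by
  have hx : 0 < c * exp t := mul_pos hc (exp_pos t)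
  rw [← mul_assoc, mul_comm (c * exp t), rpow_sub_one hx.ne', div_mul_cancel₀ _ hx.ne',
    mul_rpow hc.le (exp_pos t).le, ← exp_mul, mul_assoc, ← exp_add, hα, ← mul_assoc γ, hγ]
  congr 2
  rw [cosh_eq, exp_neg]
  field_simp
  ring

/-- Sommerfeld representation: for `α, γ > 0` and real `ν`, the integral
`∫₀^∞ x^{ν−1} e^{−α/x − γx} dx` is finite and equals
`2 (α/γ)^{ν/2} ∫₀^∞ e^{−2√(αγ) cosh t} cosh(νt) dt`, the latter integral also being finite. -/
theorem stmt5 (α γ ν : ℝ) (hα : 0 < α) (hγ : 0 < γ) :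
    IntegrableOn (fun x : ℝ => x ^ (ν - 1) * Real.exp (-α / x - γ * x)) (Set.Ioi 0) ∧
    IntegrableOn (fun t : ℝ =>
      Real.exp (-2 * Real.sqrt (α * γ) * Real.cosh t) * Real.cosh (ν * t)) (Set.Ioi 0) ∧
    (∫ x in Set.Ioi (0 : ℝ), x ^ (ν - 1) * Real.exp (-α / x - γ * x)) =
      2 * (α / γ) ^ (ν / 2) *
        ∫ t in Set.Ioi (0 : ℝ),
          Real.exp (-2 * Real.sqrt (α * γ) * Real.cosh t) * Real.cosh (ν * t) := by
  have hαsc : α = √(α * γ) * √(α / γ) := by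
    rw [← sqrt_mul (mul_pos hα hγ).le, show α * γ * (α / γ) = α * α by field_simp,
      sqrt_mul_self hα.le]
  have hγcs : γ * √(α / γ) = √(α * γ) := by
    rw [← sqrt_mul_self hγ.le, ← sqrt_mul (mul_self_nonneg γ), sqrt_mul_self hγ.le]
    congr 1
    field_simp
  have hcν : √(α / γ) ^ ν = (α / γ) ^ (ν / 2) := by
    rw [sqrt_eq_rpow, ← rpow_mul (div_pos hα hγ).le, one_div_mul_eq_div]
  set s := √(α * γ)
  set c := √(α / γ)
  have hc : 0 < c := sqrt_pos.2 (div_pos hα hγ)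
  have h2s : 0 < 2 * s := mul_pos two_pos (sqrt_pos.2 (mul_pos hα hγ))
  have hsubst : (fun t => (c * exp t) • ((c * exp t) ^ (ν - 1) *
      exp (-α / (c * exp t) - γ * (c * exp t)))) = fun t => c ^ ν * exp (ν * t - 2 * s * cosh t) :=
    funext (mul_exp_mul_rpow_mul_exp_neg_div_sub_mul hc hαsc hγcs ν)
  refine ⟨?_, ?_, ?_⟩
  · rw [integrableOn_Ioi_zero_iff_integrable_comp_mul_exp hc, hsubst]
    exact (integrable_exp_mul_sub_mul_cosh h2s ν).const_mul _
  · simpa only [neg_mul] using (integrable_exp_neg_mul_cosh_mul_cosh h2s ν).integrableOn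
  · rw [integral_Ioi_zero_eq_integral_comp_mul_exp hc, hsubst, integral_const_mul,
      integral_exp_mul_sub_mul_cosh h2s, hcν, neg_mul 2 s]
    ring
end

section
/- For all real numbers M > 0 and b > 0, ∫₀^∞ s^{−1/2} e^{−Ms − b/s} ds = √(π/M) · e^{−2√(bM)}. -/
/-!
Substituting `s = t²` and completing the square, `M t² + b / t² = (a t - c / t)² + 2ac` with
`a = √M`, `c = √b`, reduces the integral to `2 e^{-2ac} ∫₀^∞ e^{-(a t - c / t)²} dt`. This is the
Cauchy–Schlömilch transformation: for even integrable `g`,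
`∫₀^∞ g(a t - c / t) dt = (2a)⁻¹ ∫_ℝ g`. Indeed `u = a t - c / t` maps `(0, ∞)` bijectively onto
`ℝ` with `du = (a + c / t²) dt`, and the inversion `t ↦ c / (a t)`, which changes the sign of `u`,
shows that the `c / t²` part contributes as much as the `a` part. For `g u = e^{-u²}` the
Gaussian integral `√π` finishes the computation.
-/

open MeasureTheory Real Set

variable {E : Type*} [NormedAddCommGroup E] [NormedSpace ℝ E]

theorem integral_Ioi_div_sq_smul_comp_div (f : ℝ → E) {k : ℝ} (hk : 0 < k) :
    ∫ t in Ioi 0, (k / t ^ 2) • f (k / t) = ∫ t in Ioi 0, f t := by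
  have himage : (fun t : ℝ => k / t) '' Ioi 0 = Ioi 0 := by
    ext u
    refine ⟨?_, fun hu => ⟨k / u, div_pos hk hu, div_div_cancel₀ hk.ne'⟩⟩
    rintro ⟨t, ht, rfl⟩
    exact div_pos hk ht
  have hderiv : ∀ t ∈ Ioi (0 : ℝ), HasDerivWithinAt (fun t => k / t) (-(k / t ^ 2)) (Ioi 0) t :=
    fun t ht => by
      simpa [div_eq_mul_inv, neg_div] using
        ((hasDerivAt_inv (ne_of_gt ht)).const_mul k).hasDerivWithinAt
  have hinj : InjOn (fun t : ℝ => k / t) (Ioi 0) := fun x _ y _ h =>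
    inv_injective (mul_left_cancel₀ hk.ne' h)
  have hcov := integral_image_eq_integral_abs_deriv_smul measurableSet_Ioi hderiv hinj f
  rw [himage] at hcov
  rw [hcov]
  refine setIntegral_congr_fun measurableSet_Ioi fun t ht => ?_
  rw [abs_neg, abs_of_pos (div_pos hk (pow_pos ht 2))]

theorem integral_Ioi_rpow_neg_half_smul (f : ℝ → E) :
    ∫ s in Ioi 0, s ^ (-(1 : ℝ) / 2) • f s = (2 : ℝ) • ∫ t in Ioi 0, f (t ^ 2) := by
  rw [← integral_comp_rpow_Ioi_of_pos two_pos, ← integral_smul]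
  refine setIntegral_congr_fun measurableSet_Ioi fun t ht => ?_
  have ht : 0 < t := ht
  have hroot : (t ^ 2) ^ (-(1 : ℝ) / 2) = t⁻¹ := by
    rw [← rpow_two, ← rpow_mul ht.le]; norm_num [rpow_neg_one]
  simp only [rpow_two, hroot, smul_smul]
  norm_num
  field_simp

theorem hasDerivAt_mul_sub_div (a c : ℝ) {t : ℝ} (ht : t ≠ 0) :
    HasDerivAt (fun t => a * t - c / t) (a + c / t ^ 2) t := by
  simp only [div_eq_mul_inv]
  exact (((hasDerivAt_id' t).const_mul a).sub ((hasDerivAt_inv ht).const_mul c)).congr_deriv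
    (by ring)

section CauchySchlomilch

variable {a c : ℝ}

theorem strictMonoOn_mul_sub_div (ha : 0 < a) (hc : 0 < c) :
    StrictMonoOn (fun t => a * t - c / t) (Ioi 0) := fun _ hx _ _ hxy =>
  sub_lt_sub (mul_lt_mul_of_pos_left hxy ha) (div_lt_div_of_pos_left hc hx hxy)

theorem image_mul_sub_div_Ioi (ha : 0 < a) (hc : 0 < c) :
    (fun t => a * t - c / t) '' Ioi 0 = univ := by
  refine eq_univ_of_forall fun u => ?_
  -- the positive root of `a t² - u t - c = 0`
  set r := √(u ^ 2 + 4 * a * c)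
  have hr : r ^ 2 = u ^ 2 + 4 * a * c := sq_sqrt (by positivity)
  have hur : -u < r := by
    have : |u| < r := by
      rw [← sqrt_sq_eq_abs]; exact sqrt_lt_sqrt (sq_nonneg u) (by linarith [mul_pos ha hc])
    linarith [neg_abs_le u]
  refine ⟨(u + r) / (2 * a), ?_, ?_⟩
  · exact mem_Ioi.2 (div_pos (by linarith) (by positivity))
  have : u + r ≠ 0 := by linarith
  field_simp
  linear_combination hr

theorem abs_add_div_sq_of_pos (ha : 0 < a) (hc : 0 < c) {t : ℝ} (ht : 0 < t) :
    |a + c / t ^ 2| = a + c / t ^ 2 :=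
  abs_of_pos (by positivity)

theorem integral_eq_integral_Ioi_smul_comp_mul_sub_div (g : ℝ → E) (ha : 0 < a) (hc : 0 < c) :
    ∫ u, g u = ∫ t in Ioi 0, (a + c / t ^ 2) • g (a * t - c / t) := by
  rw [← setIntegral_univ, ← image_mul_sub_div_Ioi ha hc,
    integral_image_eq_integral_abs_deriv_smul measurableSet_Ioi
      (fun t ht => (hasDerivAt_mul_sub_div a c (ne_of_gt ht)).hasDerivWithinAt)
      (strictMonoOn_mul_sub_div ha hc).injOn]
  exact setIntegral_congr_fun measurableSet_Ioi fun t ht => by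
    rw [abs_add_div_sq_of_pos ha hc ht]

theorem MeasureTheory.Integrable.integrableOn_Ioi_smul_comp_mul_sub_div {g : ℝ → E}
    (hg : Integrable g) (ha : 0 < a) (hc : 0 < c) :
    IntegrableOn (fun t => (a + c / t ^ 2) • g (a * t - c / t)) (Ioi 0) := by
  have := (integrableOn_image_iff_integrableOn_abs_deriv_smul measurableSet_Ioi
    (fun t ht => (hasDerivAt_mul_sub_div a c (ne_of_gt ht)).hasDerivWithinAt)
    (strictMonoOn_mul_sub_div ha hc).injOn g).1
  rw [image_mul_sub_div_Ioi ha hc, integrableOn_univ] at this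
  exact (this hg).congr_fun (fun t ht => by simp only [abs_add_div_sq_of_pos ha hc ht])
    measurableSet_Ioi

theorem MeasureTheory.Integrable.integrableOn_Ioi_comp_mul_sub_div {g : ℝ → E} (hg : Integrable g)
    (ha : 0 < a) (hc : 0 < c) :
    IntegrableOn (fun t => g (a * t - c / t)) (Ioi 0) := by
  have hint := hg.integrableOn_Ioi_smul_comp_mul_sub_div ha hc
  have hmeas : AEStronglyMeasurable (fun t => g (a * t - c / t)) (volume.restrict (Ioi 0)) := by
    refine (AEStronglyMeasurable.smul (f := fun t => (a + c / t ^ 2)⁻¹)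
      (by fun_prop : Measurable fun t : ℝ => (a + c / t ^ 2)⁻¹).aestronglyMeasurable
      hint.aestronglyMeasurable).congr ?_
    filter_upwards [ae_restrict_mem measurableSet_Ioi] with t ht
    have : a + c / t ^ 2 ≠ 0 := by have : (0 : ℝ) < t := ht; positivity
    show (a + c / t ^ 2)⁻¹ • (a + c / t ^ 2) • g (a * t - c / t) = g (a * t - c / t)
    rw [smul_smul, inv_mul_cancel₀ this, one_smul]
  refine (hint.fun_smul a⁻¹).mono hmeas ?_
  filter_upwards [ae_restrict_mem measurableSet_Ioi] with t ht
  have : (0 : ℝ) < t := ht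
  have hge : 1 ≤ a⁻¹ * (a + c / t ^ 2) := by
    rw [inv_mul_eq_div, le_div_iff₀ ha]; linarith [div_pos hc (pow_pos this 2)]
  rw [smul_smul, norm_smul, norm_of_nonneg (by positivity)]
  exact le_mul_of_one_le_left (norm_nonneg _) hge

theorem integral_Ioi_div_sq_smul_comp_mul_sub_div_of_even {g : ℝ → E}
    (heven : ∀ u, g (-u) = g u) (ha : 0 < a) (hc : 0 < c) :
    ∫ t in Ioi 0, (c / t ^ 2) • g (a * t - c / t) = a • ∫ t in Ioi 0, g (a * t - c / t) := by
  rw [← integral_Ioi_div_sq_smul_comp_div _ (div_pos hc ha), ← integral_smul]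
  refine setIntegral_congr_fun measurableSet_Ioi fun t ht => ?_
  have ht : t ≠ 0 := ne_of_gt ht
  have hflip : a * (c / a / t) - c / (c / a / t) = -(a * t - c / t) := by field_simp; ring
  rw [hflip, heven, smul_smul]
  congr 1
  field_simp

theorem integral_Ioi_comp_mul_sub_div_of_even {g : ℝ → E} (hg : Integrable g)
    (heven : ∀ u, g (-u) = g u) (ha : 0 < a) (hc : 0 < c) :
    ∫ t in Ioi 0, g (a * t - c / t) = (2 * a)⁻¹ • ∫ u, g u := by
  have hint := hg.integrableOn_Ioi_comp_mul_sub_div ha hc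
  have hint_div : IntegrableOn (fun t => (c / t ^ 2) • g (a * t - c / t)) (Ioi 0) :=
    ((hg.integrableOn_Ioi_smul_comp_mul_sub_div ha hc).sub (hint.fun_smul a)).congr_fun
      (fun t _ => by simp only [Pi.sub_apply, add_smul, add_sub_cancel_left]) measurableSet_Ioi
  have hsum : ∫ u, g u = (2 * a) • ∫ t in Ioi 0, g (a * t - c / t) := by
    rw [integral_eq_integral_Ioi_smul_comp_mul_sub_div g ha hc]
    simp only [add_smul]
    rw [integral_add (hint.fun_smul a) hint_div, integral_smul,
      integral_Ioi_div_sq_smul_comp_mul_sub_div_of_even heven ha hc, ← add_smul, two_mul]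
  rw [hsum, smul_smul, inv_mul_cancel₀ (by positivity), one_smul]

end CauchySchlomilch

/-- For `M, b > 0`, `∫₀^∞ s^{−1/2} e^{−Ms − b/s} ds = √(π/M) · e^{−2√(bM)}`. -/
theorem stmt6 (M b : ℝ) (hM : 0 < M) (hb : 0 < b) :
    (∫ s in Set.Ioi (0 : ℝ), s ^ (-(1 : ℝ) / 2) * Real.exp (-M * s - b / s)) =
      Real.sqrt (Real.pi / M) * Real.exp (-2 * Real.sqrt (b * M)) := by
  set a := √M
  set c := √b
  have ha : 0 < a := sqrt_pos.2 hM
  have hc : 0 < c := sqrt_pos.2 hb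
  have hsquare : ∀ t ∈ Ioi (0 : ℝ),
      exp (-M * t ^ 2 - b / t ^ 2) = exp (-(2 * a * c)) * exp (-(a * t - c / t) ^ 2) := by
    intro t ht
    have : t ≠ 0 := ne_of_gt ht
    rw [← exp_add, ← sq_sqrt hM.le, ← sq_sqrt hb.le]
    congr 1
    field_simp
    ring
  have hgauss : ∫ u, exp (-u ^ 2) = √π := by simpa using integral_gaussian 1
  have hgauss_int : Integrable fun u : ℝ => exp (-u ^ 2) := by
    simpa using integrable_exp_neg_mul_sq one_pos
  simp_rw [← smul_eq_mul (a := _ ^ _), integral_Ioi_rpow_neg_half_smul]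
  rw [setIntegral_congr_fun measurableSet_Ioi hsquare, integral_const_mul,
    integral_Ioi_comp_mul_sub_div_of_even hgauss_int (fun u => by rw [neg_sq]) ha hc, hgauss,
    sqrt_div pi_pos.le, sqrt_mul hb.le]
  simp only [smul_eq_mul, a, c]
  field_simp
end

section
/- Let c₀, …, c_J be real numbers with Σⱼ cⱼ = 0, and let M₀, …, M_J > 0. Then the function s ↦ Σⱼ cⱼ e^{−sMⱼ}(1/(2s) − Mⱼ) is Lebesgue integrable on (0,∞) and ∫₀^∞ Σⱼ cⱼ e^{−sMⱼ}(1/(2s) − Mⱼ) ds = −(1/2) Σⱼ cⱼ log Mⱼ. -/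
/-!
Since `∑ j, c j = 0`, the kernel `e^{-sm} (1/(2s) - m)` at `m = M j` may be replaced by its
difference with the kernel at `m = 1`. That difference splits into the Frullani integrand
`(e^{-ms} - e^{-s}) / (2s)`, with integral `log (1/m) / 2`, and the difference
`m e^{-ms} - e^{-s}` of two probability densities, with integral `0`. Integrability of the
Frullani integrand comes from `|e^{-u} - e^{-v}| ≤ |u - v| e^{-min u v}`.
-/

open MeasureTheory Set Real

lemma exp_neg_sub_exp_neg_le (u v : ℝ) : exp (-u) - exp (-v) ≤ (v - u) * exp (-u) := by
  have : exp (-v) = exp (-u) * exp (-(v - u)) := by rw [← exp_add]; ring_nf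
  nlinarith [one_sub_le_exp_neg (v - u), exp_pos (-u)]

lemma abs_exp_neg_sub_exp_neg_le (u v : ℝ) :
    |exp (-u) - exp (-v)| ≤ |u - v| * exp (-min u v) := by
  wlog h : u ≤ v generalizing u v
  · rw [abs_sub_comm, abs_sub_comm u, min_comm]
    exact this v u (le_of_not_ge h)
  rw [abs_of_nonneg (by simpa using exp_le_exp.2 (neg_le_neg h)), abs_sub_comm,
    abs_of_nonneg (sub_nonneg.2 h), min_eq_left h]
  exact exp_neg_sub_exp_neg_le u v

lemma integrableOn_inv_mul_exp_neg_sub_exp_neg {a b : ℝ} (ha : 0 < a) (hb : 0 < b) :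
    IntegrableOn (fun x => x⁻¹ * (exp (-(a * x)) - exp (-(b * x)))) (Ioi 0) := by
  refine ((exp_neg_integrableOn_Ioi 0 (lt_min ha hb)).const_mul |a - b|).mono' ?_ ?_
  · exact (continuousOn_inv₀.mono fun x hx => ne_of_gt hx).mul (by fun_prop)
      |>.aestronglyMeasurable measurableSet_Ioi
  · filter_upwards [ae_restrict_mem measurableSet_Ioi] with x (hx : 0 < x)
    rw [norm_mul, norm_inv, norm_of_nonneg hx.le, inv_mul_le_iff₀ hx, neg_mul,
      min_mul_of_nonneg _ _ hx.le]
    calc ‖exp (-(a * x)) - exp (-(b * x))‖ ≤ |a * x - b * x| * exp (-min (a * x) (b * x)) :=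
          abs_exp_neg_sub_exp_neg_le _ _
      _ = x * (|a - b| * exp (-min (a * x) (b * x))) := by
          rw [← sub_mul, abs_mul, abs_of_pos hx]; ring

lemma integral_inv_mul_exp_neg_sub_exp_neg {a b : ℝ} (ha : 0 < a) (hb : 0 < b) :
    ∫ x in Ioi 0, x⁻¹ * (exp (-(a * x)) - exp (-(b * x))) = log (b / a) := by
  simpa using Frullani.integral_Ioi_eq (f := fun x => exp (-x)) (L := 1) (R := 0)
    (continuous_neg.rexp.locallyIntegrable.locallyIntegrableOn _) ha hb
    (by simpa using (continuous_neg.rexp.tendsto 0).mono_left nhdsWithin_le_nhds)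
    tendsto_exp_neg_atTop_nhds_zero
    (by simpa using integrableOn_inv_mul_exp_neg_sub_exp_neg ha hb)

lemma integral_mul_exp_neg_mul_Ioi {m : ℝ} (hm : 0 < m) :
    ∫ x in Ioi 0, m * exp (-m * x) = 1 := by
  rw [integral_const_mul, integral_exp_mul_Ioi (neg_lt_zero.2 hm)]
  field_simp
  simp

noncomputable def expKernel (m s : ℝ) : ℝ := exp (-s * m) * (1 / (2 * s) - m)

-- Also at `s = 0`, where both `1 / (2 * s)` and `s⁻¹` are `0`.
lemma expKernel_sub_expKernel (m b : ℝ) :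
    (fun s => expKernel m s - expKernel b s) = fun s =>
      2⁻¹ * (s⁻¹ * (exp (-(m * s)) - exp (-(b * s)))) -
        (m * exp (-m * s) - b * exp (-b * s)) := by
  ext s
  simp only [expKernel, neg_mul, mul_comm s]
  ring

lemma integrableOn_expKernel_sub {m b : ℝ} (hm : 0 < m) (hb : 0 < b) :
    IntegrableOn (fun s => expKernel m s - expKernel b s) (Ioi 0) := by
  rw [expKernel_sub_expKernel]
  exact ((integrableOn_inv_mul_exp_neg_sub_exp_neg hm hb).const_mul _).sub
    (((exp_neg_integrableOn_Ioi 0 hm).const_mul m).sub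
      ((exp_neg_integrableOn_Ioi 0 hb).const_mul b))

lemma integral_expKernel_sub {m b : ℝ} (hm : 0 < m) (hb : 0 < b) :
    ∫ s in Ioi 0, expKernel m s - expKernel b s = log (b / m) / 2 := by
  have hfrullani := (integrableOn_inv_mul_exp_neg_sub_exp_neg hm hb).const_mul 2⁻¹
  have hm' := (exp_neg_integrableOn_Ioi 0 hm).const_mul m
  have hb' := (exp_neg_integrableOn_Ioi 0 hb).const_mul b
  rw [expKernel_sub_expKernel, integral_sub hfrullani (by exact hm'.sub hb'),
    integral_sub hm' hb', integral_const_mul, integral_inv_mul_exp_neg_sub_exp_neg hm hb,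
    integral_mul_exp_neg_mul_Ioi hm, integral_mul_exp_neg_mul_Ioi hb]
  ring

lemma Finset.sum_mul_sub_const_of_sum_eq_zero {ι R : Type*} [CommRing R] {s : Finset ι}
    {c f : ι → R} (hc : ∑ i ∈ s, c i = 0) (a : R) :
    ∑ i ∈ s, c i * (f i - a) = ∑ i ∈ s, c i * f i := by
  simp [mul_sub, Finset.sum_sub_distrib, ← Finset.sum_mul, hc]

/-- Frullani-type identity: if `Σⱼ cⱼ = 0` and `Mⱼ > 0`, then
`s ↦ Σⱼ cⱼ e^{−sMⱼ}(1/(2s) − Mⱼ)` is integrable on `(0,∞)` with integral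
`−(1/2) Σⱼ cⱼ log Mⱼ`. -/
theorem stmt7 (J : ℕ) (c M : Fin (J + 1) → ℝ) (hc : ∑ j, c j = 0) (hM : ∀ j, 0 < M j) :
    IntegrableOn
      (fun s : ℝ => ∑ j, c j * Real.exp (-s * M j) * (1 / (2 * s) - M j)) (Set.Ioi 0) ∧
    (∫ s in Set.Ioi (0 : ℝ), ∑ j, c j * Real.exp (-s * M j) * (1 / (2 * s) - M j)) =
      -(1 / 2) * ∑ j, c j * Real.log (M j) := by
  have hsum : (fun s : ℝ => ∑ j, c j * Real.exp (-s * M j) * (1 / (2 * s) - M j)) =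
      fun s => ∑ j, c j * (expKernel (M j) s - expKernel 1 s) := by
    ext s
    simp only [Finset.sum_mul_sub_const_of_sum_eq_zero hc, expKernel, mul_assoc]
  have hint (j : Fin (J + 1)) :
      IntegrableOn (fun s => c j * (expKernel (M j) s - expKernel 1 s)) (Ioi 0) :=
    (integrableOn_expKernel_sub (hM j) one_pos).const_mul (c j)
  rw [hsum, integral_finsetSum _ fun j _ => hint j]
  refine ⟨integrable_finsetSum _ fun j _ => hint j, ?_⟩
  simp only [integral_const_mul, integral_expKernel_sub (hM _) one_pos, one_div, log_inv,
    Finset.mul_sum]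
  exact Finset.sum_congr rfl fun j _ => by ring
end

section
/- Let c₀, …, c_J be real numbers and M₀, …, M_J > 0 with Σⱼ cⱼ = 0 and Σⱼ cⱼ Mⱼ = 0. Then the function s ↦ s^{−2} Σⱼ cⱼ e^{−sMⱼ} is Lebesgue integrable on (0,∞) and ∫₀^∞ s^{−2} Σⱼ cⱼ e^{−sMⱼ} ds = Σⱼ cⱼ Mⱼ log Mⱼ. -/
/-!
Taylor's formula with integral remainder writes each Pauli–Villars piece as a Laplace transform,
`(e^{-sM} - e^{-s}) / s² + (M - 1) e^{-s} / s = ∫_1^M (M - u) e^{-su} du`, and the integrand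
`s^{-2} Σⱼ cⱼ e^{-sMⱼ}` equals `Σⱼ cⱼ` times the piece for `Mⱼ` because the two conditions
`Σⱼ cⱼ = 0` and `Σⱼ cⱼ Mⱼ = 0` annihilate everything affine in `Mⱼ`. Since `u` stays away
from `0`, Fubini applies and turns `∫_0^∞` of the piece into
`∫_1^M (M - u) / u du = M log M - M + 1`; the affine part `1 - M` is annihilated once more.
-/

open MeasureTheory Real Set
open scoped Interval

theorem Finset.sum_mul_add_affine_eq {ι R : Type*} [CommRing R] (t : Finset ι) {c M : ι → R}
    (hc : ∑ i ∈ t, c i = 0) (hcM : ∑ i ∈ t, c i * M i = 0) (x : ι → R) (α β : R) :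
    ∑ i ∈ t, c i * (x i + α + β * M i) = ∑ i ∈ t, c i * x i := by
  simp only [mul_add, Finset.sum_add_distrib, ← Finset.sum_mul, mul_left_comm _ β,
    ← Finset.mul_sum, hc, hcM, zero_mul, mul_zero, add_zero]

theorem integral_exp_neg_mul_Ioi_zero {u : ℝ} (hu : 0 < u) :
    ∫ s in Ioi (0 : ℝ), exp (-s * u) = u⁻¹ := by
  simpa [mul_comm] using integral_exp_mul_Ioi (neg_lt_zero.2 hu) 0

theorem integrable_prod_mul_exp_neg_mul {g : ℝ → ℝ} {a b : ℝ} (ha : 0 < a) (hb : 0 < b)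
    (hg : IntervalIntegrable g volume a b) :
    Integrable (fun p : ℝ × ℝ => g p.2 * exp (-p.1 * p.2))
      ((volume.restrict (Ioi 0)).prod (volume.restrict (Ι a b))) := by
  have hm : 0 < min a b := lt_min ha hb
  have hexp : Continuous fun p : ℝ × ℝ => exp (-p.1 * p.2) := by fun_prop
  refine Integrable.mono' ((exp_neg_integrableOn_Ioi 0 hm).mul_prod hg.def'.norm)
    (hg.def'.aestronglyMeasurable.comp_snd.mul hexp.aestronglyMeasurable) ?_
  rw [Measure.prod_restrict]
  filter_upwards [ae_restrict_mem (measurableSet_Ioi.prod measurableSet_uIoc)]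
    with ⟨s, u⟩ ⟨hs, hu⟩
  have hdecay : exp (-s * u) ≤ exp (-min a b * s) :=
    exp_le_exp.2 (by nlinarith [mem_Ioi.1 hs, hu.1])
  rw [norm_mul, norm_of_nonneg (exp_pos _).le, mul_comm]
  exact mul_le_mul_of_nonneg_right hdecay (norm_nonneg _)

theorem integrableOn_intervalIntegral_mul_exp_neg_mul {g : ℝ → ℝ} {a b : ℝ} (ha : 0 < a)
    (hb : 0 < b) (hg : IntervalIntegrable g volume a b) :
    IntegrableOn (fun s => ∫ u in a..b, g u * exp (-s * u)) (Ioi 0) := by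
  simp_rw [intervalIntegral.intervalIntegral_eq_integral_uIoc, smul_eq_mul]
  exact (integrable_prod_mul_exp_neg_mul ha hb hg).integral_prod_left.const_mul _

theorem integral_Ioi_intervalIntegral_mul_exp_neg_mul {g : ℝ → ℝ} {a b : ℝ} (ha : 0 < a)
    (hb : 0 < b) (hg : IntervalIntegrable g volume a b) :
    ∫ s in Ioi 0, ∫ u in a..b, g u * exp (-s * u) = ∫ u in a..b, g u / u := by
  have hinner : EqOn (fun u => ∫ s in Ioi 0, g u * exp (-s * u)) (fun u => g u / u) (Ι a b) :=
    fun u hu => by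
      simp only [MeasureTheory.integral_const_mul,
        integral_exp_neg_mul_Ioi_zero ((lt_min ha hb).trans hu.1), div_eq_mul_inv]
  simp_rw [intervalIntegral.intervalIntegral_eq_integral_uIoc, smul_eq_mul,
    MeasureTheory.integral_const_mul, integral_integral_swap (f := fun s u => g u * exp (-s * u))
      (integrable_prod_mul_exp_neg_mul ha hb hg),
    setIntegral_congr_fun measurableSet_uIoc hinner]

theorem integral_sub_mul_exp_neg_mul {s : ℝ} (hs : s ≠ 0) (a b : ℝ) :
    ∫ u in a..b, (b - u) * exp (-s * u) =
      (exp (-s * b) - exp (-s * a)) / s ^ 2 + (b - a) * exp (-s * a) / s := by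
  have hderiv : ∀ u ∈ [[a, b]],
      HasDerivAt (fun v => exp (-s * v) / s ^ 2 - (b - v) * exp (-s * v) / s)
        ((b - u) * exp (-s * u)) u := by
    intro u _
    have he : HasDerivAt (fun v => exp (-s * v)) (exp (-s * u) * -s) u := by
      simpa using ((hasDerivAt_id u).const_mul (-s)).exp
    refine ((he.div_const (s ^ 2)).sub
      ((((hasDerivAt_id u).const_sub b).mul he).div_const s)).congr_deriv ?_
    simp only [id]
    field_simp
    ring
  rw [intervalIntegral.integral_eq_sub_of_hasDerivAt hderiv
    ((by fun_prop : Continuous fun u => (b - u) * exp (-s * u)).intervalIntegrable a b)]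
  field_simp
  ring

theorem integral_sub_div_self {a b : ℝ} (ha : 0 < a) (hb : 0 < b) :
    ∫ u in a..b, (b - u) / u = b * log (b / a) - (b - a) := by
  have hpos : ∀ u ∈ [[a, b]], 0 < u := fun u hu => (lt_min ha hb).trans_le hu.1
  have hinv : IntervalIntegrable (fun u : ℝ => u⁻¹) volume a b :=
    intervalIntegral.intervalIntegrable_inv (fun u hu => (hpos u hu).ne') continuousOn_id
  rw [intervalIntegral.integral_congr (g := fun u => b * u⁻¹ - 1)
      fun u hu => by field_simp [(hpos u hu).ne'],
    intervalIntegral.integral_sub (hinv.const_mul b) intervalIntegrable_const,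
    intervalIntegral.integral_const_mul, integral_inv_of_pos ha hb]
  simp

/-- Frullani-type identity: if `Σⱼ cⱼ = 0`, `Σⱼ cⱼ Mⱼ = 0` and `Mⱼ > 0`, then
`s ↦ s^{−2} Σⱼ cⱼ e^{−sMⱼ}` is integrable on `(0,∞)` with integral `Σⱼ cⱼ Mⱼ log Mⱼ`. -/
theorem stmt8 (J : ℕ) (c M : Fin (J + 1) → ℝ) (hc : ∑ j, c j = 0)
    (hcM : ∑ j, c j * M j = 0) (hM : ∀ j, 0 < M j) :
    IntegrableOn (fun s : ℝ => s ^ (-2 : ℤ) * ∑ j, c j * Real.exp (-s * M j)) (Set.Ioi 0) ∧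
    (∫ s in Set.Ioi (0 : ℝ), s ^ (-2 : ℤ) * ∑ j, c j * Real.exp (-s * M j)) =
      ∑ j, c j * M j * Real.log (M j) := by
  set F : Fin (J + 1) → ℝ → ℝ := fun j s => ∫ u in (1 : ℝ)..M j, (M j - u) * exp (-s * u)
  have hsub : ∀ j, IntervalIntegrable (fun u => M j - u) volume 1 (M j) := fun j =>
    (continuous_const.sub continuous_id).intervalIntegrable _ _
  have hF : ∀ j, IntegrableOn (F j) (Ioi 0) := fun j =>
    integrableOn_intervalIntegral_mul_exp_neg_mul one_pos (hM j) (hsub j)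
  have hpt : EqOn (fun s : ℝ => s ^ (-2 : ℤ) * ∑ j, c j * exp (-s * M j))
      (fun s => ∑ j, c j * F j s) (Ioi 0) := by
    intro s hs
    have hs0 : s ≠ 0 := ne_of_gt hs
    simp only [F, integral_sub_mul_exp_neg_mul hs0]
    rw [← Finset.sum_mul_add_affine_eq _ hc hcM _ (-(1 + s) * exp (-s))
      (s * exp (-s)), Finset.mul_sum]
    refine Finset.sum_congr rfl fun j _ => ?_
    field_simp
    ring
  have hsum : IntegrableOn (fun s => ∑ j, c j * F j s) (Ioi 0) :=
    integrable_finsetSum _ fun j _ => (hF j).const_mul (c j)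
  refine ⟨hsum.congr_fun hpt.symm measurableSet_Ioi, ?_⟩
  rw [setIntegral_congr_fun measurableSet_Ioi hpt,
    integral_finsetSum _ fun j _ => (hF j).const_mul (c j)]
  simp only [F, MeasureTheory.integral_const_mul,
    integral_Ioi_intervalIntegral_mul_exp_neg_mul one_pos (hM _) (hsub _),
    integral_sub_div_self one_pos (hM _), div_one]
  calc ∑ j, c j * (M j * log (M j) - (M j - 1))
      = ∑ j, c j * (M j * log (M j) + 1 + -1 * M j) := Finset.sum_congr rfl fun j _ => by ring
    _ = ∑ j, c j * M j * log (M j) := by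
      rw [Finset.sum_mul_add_affine_eq _ hc hcM]
      exact Finset.sum_congr rfl fun j _ => (mul_assoc _ _ _).symm
end

section
/- For every X > 0, the series Σ_{n=1}^∞ (−1)ⁿ ∫₀^∞ (1 − nX cosh t) e^{−nX cosh t} dt converges absolutely and its sum equals ∫₀^∞ e^{−X cosh t} (X cosh t − 1 − e^{−X cosh t}) / (1 + e^{−X cosh t})² dt. -/
/-!
Write `b = (n + 1) X cosh t`, so that the `n`-th summand is `(1 - b) e^{-b}`. For fixed `t`,
with `a = X cosh t` and `y = -e^{-a}`, the signed series is `∑ (1 - m a) yᵐ = y (1 - y - a) / (1 - y)²`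
(sum over `m ≥ 1`), which is the integrand on the right. Since `|(1 - b) e^{-b}| ≤ 2 e^{-b/2}` and
`(n + 1) cosh t ≥ n + t`, the `n`-th summand is at most `e^{-nX/2} · 2 e^{-Xt/2}`; these bounds have
summable integrals, which gives absolute convergence and lets the sum pass under the integral.
-/

open MeasureTheory Real Set

theorem hasSum_one_sub_mul_pow_succ {𝕜 : Type*} [NormedField 𝕜] {y : 𝕜} (hy : ‖y‖ < 1)
    (a : 𝕜) :
    HasSum (fun n : ℕ => (1 - (n + 1) * a) * y ^ (n + 1)) (y * (1 - y - a) / (1 - y) ^ 2) := by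
  have hy1 : 1 - y ≠ 0 := by
    intro h
    rw [← eq_of_sub_eq_zero h, norm_one] at hy
    exact lt_irrefl _ hy
  have hpow : HasSum (fun n : ℕ => y ^ (n + 1)) (y / (1 - y)) := by
    have := (hasSum_geometric_of_norm_lt_one hy).mul_left y
    simp only [← pow_succ'] at this
    rwa [div_eq_mul_inv]
  have hmul : HasSum (fun n : ℕ => ((n : 𝕜) + 1) * y ^ (n + 1)) (y / (1 - y) ^ 2) := by
    have := (hasSum_nat_add_iff' (f := fun n : ℕ => (n : 𝕜) * y ^ n) 1).2
      (hasSum_coe_mul_geometric_of_norm_lt_one hy)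
    simpa using this
  have hterm : (fun n : ℕ => (1 - (n + 1) * a) * y ^ (n + 1))
      = fun n : ℕ => y ^ (n + 1) - a * (((n : 𝕜) + 1) * y ^ (n + 1)) := by
    funext n; ring
  have hval : y * (1 - y - a) / (1 - y) ^ 2 = y / (1 - y) - a * (y / (1 - y) ^ 2) := by
    field_simp
  rw [hterm, hval]
  exact hpow.sub (hmul.mul_left a)

theorem hasSum_neg_one_pow_mul_one_sub_mul_exp {a : ℝ} (ha : 0 < a) :
    HasSum (fun n : ℕ => (-1) ^ (n + 1) * ((1 - (n + 1) * a) * exp (-((n + 1) * a))))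
      (exp (-a) * (a - 1 - exp (-a)) / (1 + exp (-a)) ^ 2) := by
  have hy : ‖-exp (-a)‖ < 1 := by
    rw [norm_neg, norm_of_nonneg (exp_pos _).le, exp_lt_one_iff]
    linarith
  have hterm : (fun n : ℕ => (-1) ^ (n + 1) * ((1 - (n + 1) * a) * exp (-((n + 1) * a))))
      = fun n : ℕ => (1 - (n + 1) * a) * (-exp (-a)) ^ (n + 1) := by
    funext n
    rw [neg_pow (exp (-a)), ← exp_nat_mul]
    push_cast
    ring_nf
  have hval : exp (-a) * (a - 1 - exp (-a)) / (1 + exp (-a)) ^ 2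
      = -exp (-a) * (1 - -exp (-a) - a) / (1 - -exp (-a)) ^ 2 := by
    ring
  rw [hterm, hval]
  exact hasSum_one_sub_mul_pow_succ hy a

theorem abs_one_sub_mul_exp_neg_le {b : ℝ} (hb : 0 ≤ b) :
    |(1 - b) * exp (-b)| ≤ 2 * exp (-(b / 2)) :=
  calc |(1 - b) * exp (-b)| = |1 - b| * exp (-b) := by rw [abs_mul, abs_of_pos (exp_pos _)]
    _ ≤ 2 * exp (b / 2) * exp (-b) := by
        have := add_one_le_exp (b / 2)
        gcongr
        exact abs_le.2 ⟨by linarith, by linarith⟩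
    _ = 2 * exp (-(b / 2)) := by rw [mul_assoc, ← exp_add]; ring_nf

theorem Real.self_le_cosh (t : ℝ) : t ≤ cosh t := by
  rcases le_total t 0 with ht | ht
  · exact ht.trans (cosh_pos t).le
  · exact (self_le_sinh_iff.2 ht).trans (sinh_lt_cosh t).le

theorem summable_integral_norm_of_norm_le_geometric {α E : Type*} [MeasurableSpace α]
    {μ : Measure α} [NormedAddCommGroup E] {F : ℕ → α → E} {g : α → ℝ} {r : ℝ}
    (hr₀ : 0 ≤ r) (hr₁ : r < 1) (hg : Integrable g μ)
    (hFg : ∀ n, ∀ᵐ x ∂μ, ‖F n x‖ ≤ r ^ n * g x) :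
    Summable fun n => ∫ x, ‖F n x‖ ∂μ := by
  refine .of_nonneg_of_le (fun n => integral_nonneg fun x => norm_nonneg _) (fun n => ?_)
    ((summable_geometric_of_lt_one hr₀ hr₁).mul_right (∫ x, g x ∂μ))
  rw [← integral_const_mul]
  exact integral_mono_of_nonneg (.of_forall fun x => norm_nonneg _) (hg.const_mul _) (hFg n)

/-- Indexed from `0`: `∫₀^∞ besselTerm X n t dt = K₀(mX) − mX K₁(mX)` with `m = n + 1`. -/
noncomputable def besselTerm (X : ℝ) (n : ℕ) (t : ℝ) : ℝ :=
  (1 - ((n : ℝ) + 1) * X * cosh t) * exp (-(((n : ℝ) + 1) * X) * cosh t)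

theorem continuous_besselTerm (X : ℝ) (n : ℕ) : Continuous (besselTerm X n) := by
  unfold besselTerm
  fun_prop

theorem abs_besselTerm_le {X : ℝ} (hX : 0 ≤ X) (n : ℕ) (t : ℝ) :
    |besselTerm X n t| ≤ exp (-(X / 2)) ^ n * (2 * exp (-(X / 2) * t)) := by
  have hb : 0 ≤ ((n : ℝ) + 1) * X * cosh t := by positivity
  have hcosh : (n : ℝ) + t ≤ ((n : ℝ) + 1) * cosh t := by
    nlinarith [one_le_cosh t, self_le_cosh t]
  calc |besselTerm X n t| ≤ 2 * exp (-((((n : ℝ) + 1) * X * cosh t) / 2)) := by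
        simpa only [besselTerm, neg_mul] using abs_one_sub_mul_exp_neg_le hb
    _ ≤ 2 * exp (n * -(X / 2) + -(X / 2) * t) := by
        gcongr
        nlinarith
    _ = exp (-(X / 2)) ^ n * (2 * exp (-(X / 2) * t)) := by
        rw [exp_add, exp_nat_mul]
        ring

theorem hasSum_neg_one_pow_mul_besselTerm {X : ℝ} (hX : 0 < X) (t : ℝ) :
    HasSum (fun n : ℕ => (-1) ^ (n + 1) * besselTerm X n t)
      (exp (-X * cosh t) * (X * cosh t - 1 - exp (-X * cosh t)) /
        (1 + exp (-X * cosh t)) ^ 2) := by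
  simpa only [besselTerm, neg_mul, mul_assoc] using
    hasSum_neg_one_pow_mul_one_sub_mul_exp (mul_pos hX (cosh_pos t))

/-- For `X > 0`, the series `Σ_{n=1}^∞ (−1)ⁿ ∫₀^∞ (1 − nX cosh t) e^{−nX cosh t} dt`
converges absolutely with sum
`∫₀^∞ e^{−X cosh t}(X cosh t − 1 − e^{−X cosh t})/(1 + e^{−X cosh t})² dt`. -/
theorem stmt13 (X : ℝ) (hX : 0 < X) :
    Summable (fun n : ℕ =>
      |∫ t in Set.Ioi (0 : ℝ),
        (1 - ((n : ℝ) + 1) * X * Real.cosh t) *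
          Real.exp (-(((n : ℝ) + 1) * X) * Real.cosh t)|) ∧
    (∑' n : ℕ, (-1 : ℝ) ^ (n + 1) *
        ∫ t in Set.Ioi (0 : ℝ),
          (1 - ((n : ℝ) + 1) * X * Real.cosh t) *
            Real.exp (-(((n : ℝ) + 1) * X) * Real.cosh t)) =
      ∫ t in Set.Ioi (0 : ℝ),
        Real.exp (-X * Real.cosh t) *
          (X * Real.cosh t - 1 - Real.exp (-X * Real.cosh t)) /
            (1 + Real.exp (-X * Real.cosh t)) ^ 2 := by
  change Summable (fun n : ℕ => |∫ t in Ioi 0, besselTerm X n t|) ∧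
    ∑' n : ℕ, (-1 : ℝ) ^ (n + 1) * ∫ t in Ioi 0, besselTerm X n t = _
  have hg : IntegrableOn (fun t => 2 * exp (-(X / 2) * t)) (Ioi 0) :=
    (exp_neg_integrableOn_Ioi 0 (by positivity)).const_mul 2
  have hbound (n : ℕ) : ∀ᵐ t ∂volume.restrict (Ioi 0),
      ‖besselTerm X n t‖ ≤ exp (-(X / 2)) ^ n * (2 * exp (-(X / 2) * t)) :=
    .of_forall (abs_besselTerm_le hX.le n)
  have hint (n : ℕ) : IntegrableOn (besselTerm X n) (Ioi 0) :=
    (hg.const_mul _).mono' (continuous_besselTerm X n).aestronglyMeasurable (hbound n)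
  have hsummable : Summable fun n => ∫ t in Ioi 0, ‖besselTerm X n t‖ :=
    summable_integral_norm_of_norm_le_geometric (exp_pos _).le
      (exp_lt_one_iff.2 (by linarith)) hg hbound
  refine ⟨hsummable.of_nonneg_of_le (fun n => abs_nonneg _)
    (fun n => norm_integral_le_integral_norm (besselTerm X n)), ?_⟩
  have hsigned := hasSum_integral_of_summable_integral_norm
    (F := fun n t => (-1 : ℝ) ^ (n + 1) * besselTerm X n t) (fun n => (hint n).const_mul _)
    (by simpa only [norm_mul, norm_pow, norm_neg, norm_one, one_pow, one_mul] using hsummable)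
  simp only [integral_const_mul] at hsigned
  rw [hsigned.tsum_eq]
  exact setIntegral_congr_fun measurableSet_Ioi fun t _ =>
    (hasSum_neg_one_pow_mul_besselTerm hX t).tsum_eq
end

section
/- Fix k ∈ ℝ³ and set m₀ = 1, c₀ = 1. For each n ∈ ℕ let 1 < m₁⁽ⁿ⁾ < m₂⁽ⁿ⁾ with m₁⁽ⁿ⁾ → ∞, define c₁⁽ⁿ⁾ = (1 − (m₂⁽ⁿ⁾)²)/((m₂⁽ⁿ⁾)² − (m₁⁽ⁿ⁾)²) and c₂⁽ⁿ⁾ = ((m₁⁽ⁿ⁾)² − 1)/((m₂⁽ⁿ⁾)² − (m₁⁽ⁿ⁾)²), and assume sup_n (|c₁⁽ⁿ⁾| + |c₂⁽ⁿ⁾|) < ∞. Define M⁰_n(k) = −(2/π) ∫₀¹ Σⱼ₌₀² cⱼ⁽ⁿ⁾ log((mⱼ⁽ⁿ⁾)² + u(1−u)|k|²) · u(1−u) du and Λ_n > 0 by log(Λ_n²) = −Σⱼ₌₀² cⱼ⁽ⁿ⁾ log((mⱼ⁽ⁿ⁾)²). Then lim_{n→∞} ( (2/(3π)) log Λ_n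 − M⁰_n(k) ) = U(k), where U(k) = (|k|²/(4π)) ∫₀¹ (z² − z⁴/3)/(1 + |k|²(1−z²)/4) dz. -/
/-!
Write `w = u(1-u)`. For a mass `m`, `log (m² + w|k|²) = log m² + log (1 + w|k|²/m²)`, and since
`∫₀¹ w = 1/6` the vacuum integral of that mass is `log m² / 6` plus a remainder of size at most
`|k|²/m²`. The `log m²` parts cancel exactly against `(2/(3π)) log Λ_n`, by the definition of `Λ_n`;
the remainders of the two regulator masses vanish in the limit because the `cⱼ⁽ⁿ⁾` stay bounded.
The electron term `(2/π) ∫₀¹ log (1 + w|k|²) w du` that is left becomes the Serber–Uehling integral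
after the substitution `u = (1 + z)/2` and an integration by parts.
-/

open Set MeasureTheory intervalIntegral Filter Topology Real

noncomputable def polarizationIntegral (s : ℝ) : ℝ :=
  ∫ u in Ioo (0 : ℝ) 1, log (1 + u * (1 - u) * s) * (u * (1 - u))

lemma setIntegral_Ioo_eq_intervalIntegral {a b : ℝ} (hab : a ≤ b) (f : ℝ → ℝ) :
    ∫ x in Ioo a b, f x = ∫ x in a..b, f x := by
  rw [integral_of_le hab, integral_Ioc_eq_integral_Ioo]

lemma add_mul_one_sub_mul_pos {a u t : ℝ} (ha : 0 < a) (hu : u ∈ Icc (0 : ℝ) 1) (ht : 0 ≤ t) :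
    0 < a + u * (1 - u) * t := by
  have : 0 ≤ u * (1 - u) * t := mul_nonneg (mul_nonneg hu.1 (sub_nonneg.2 hu.2)) ht
  linarith

lemma integrableOn_log_add_mul {a t : ℝ} (ha : 0 < a) (ht : 0 ≤ t) :
    IntegrableOn (fun u : ℝ ↦ log (a + u * (1 - u) * t) * (u * (1 - u))) (Ioo 0 1) := by
  have hcont : ContinuousOn (fun u : ℝ ↦ log (a + u * (1 - u) * t) * (u * (1 - u))) (Icc 0 1) :=
    ((continuousOn_const.add (by fun_prop)).log
      fun u hu ↦ (add_mul_one_sub_mul_pos ha hu ht).ne').mul (by fun_prop)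
  exact hcont.integrableOn_Icc.mono_set Ioo_subset_Icc_self

lemma integral_mul_one_sub : ∫ u in Ioo (0 : ℝ) 1, u * (1 - u) = 1 / 6 := by
  rw [setIntegral_Ioo_eq_intervalIntegral zero_le_one]
  simp only [mul_sub, mul_one]
  rw [integral_sub intervalIntegrable_id
    ((by fun_prop : Continuous fun u : ℝ ↦ u * u).intervalIntegrable 0 1)]
  norm_num [integral_id, ← sq]

lemma integral_log_add_mul_eq {a t : ℝ} (ha : 0 < a) (ht : 0 ≤ t) :
    ∫ u in Ioo (0 : ℝ) 1, log (a + u * (1 - u) * t) * (u * (1 - u)) =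
      log a / 6 + polarizationIntegral (t / a) := by
  have hsplit : EqOn (fun u : ℝ ↦ log (a + u * (1 - u) * t) * (u * (1 - u)))
      (fun u ↦ log a * (u * (1 - u)) + log (1 + u * (1 - u) * (t / a)) * (u * (1 - u)))
      (Ioo 0 1) := by
    intro u hu
    have hpos := add_mul_one_sub_mul_pos one_pos (Ioo_subset_Icc_self hu) (div_nonneg ht ha.le)
    have hfactor : a + u * (1 - u) * t = a * (1 + u * (1 - u) * (t / a)) := by field_simp
    simp only [hfactor, log_mul ha.ne' hpos.ne']
    ring
  rw [setIntegral_congr_fun measurableSet_Ioo hsplit,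
    integral_add (((by fun_prop : Continuous fun u : ℝ ↦ log a * (u * (1 - u))).integrableOn_Icc
      ).mono_set Ioo_subset_Icc_self)
      (integrableOn_log_add_mul one_pos (div_nonneg ht ha.le)),
    MeasureTheory.integral_const_mul, integral_mul_one_sub, polarizationIntegral]
  ring

lemma abs_polarizationIntegral_le {s : ℝ} (hs : 0 ≤ s) : |polarizationIntegral s| ≤ s := by
  have hle : ∀ u ∈ Ioo (0 : ℝ) 1, ‖log (1 + u * (1 - u) * s) * (u * (1 - u))‖ ≤ s := by
    rintro u ⟨hu₀, hu₁⟩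
    have hw₀ : 0 ≤ u * (1 - u) := by nlinarith
    have hw₁ : u * (1 - u) ≤ 1 := by nlinarith
    have hlog₀ : 0 ≤ log (1 + u * (1 - u) * s) := log_nonneg (by nlinarith)
    have hlog : log (1 + u * (1 - u) * s) ≤ u * (1 - u) * s := by
      linarith [log_le_sub_one_of_pos (by positivity : 0 < 1 + u * (1 - u) * s)]
    rw [Real.norm_eq_abs, abs_of_nonneg (mul_nonneg hlog₀ hw₀)]
    calc log (1 + u * (1 - u) * s) * (u * (1 - u))
        ≤ u * (1 - u) * s * (u * (1 - u)) := mul_le_mul_of_nonneg_right hlog hw₀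
      _ ≤ s := by nlinarith [mul_nonneg hw₀ hs]
  simpa [polarizationIntegral] using
    norm_setIntegral_le_of_norm_le_const (μ := volume) measure_Ioo_lt_top hle

lemma tendsto_polarizationIntegral_div_sq {ι : Type*} {l : Filter ι} {m : ι → ℝ}
    (hm : Tendsto m l atTop) (t : ℝ) (ht : 0 ≤ t) :
    Tendsto (fun i ↦ polarizationIntegral (t / m i ^ 2)) l (𝓝 0) :=
  squeeze_zero_norm (fun i ↦ abs_polarizationIntegral_le (by positivity))
    (tendsto_const_nhds.div_atTop ((tendsto_pow_atTop two_ne_zero).comp hm))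


lemma integral_comp_two_mul_sub_one_of_even {h : ℝ → ℝ} (heven : Function.Even h)
    (hint : IntervalIntegrable h volume (-1) 1) :
    ∫ u in (0 : ℝ)..1, h (2 * u - 1) = ∫ z in (0 : ℝ)..1, h z := by
  have hneg : ∫ z in (-1 : ℝ)..0, h z = ∫ z in (0 : ℝ)..1, h z := by
    simpa [heven _] using (integral_comp_neg (a := 0) (b := 1) h).symm
  have hsub : ∀ c ∈ Icc (-1 : ℝ) 1, ∀ d ∈ Icc (-1 : ℝ) 1, IntervalIntegrable h volume c d :=
    fun c hc d hd ↦ hint.mono_set (uIcc_subset_uIcc (by rwa [uIcc_of_le (by norm_num)])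
      (by rwa [uIcc_of_le (by norm_num)]))
  rw [integral_comp_mul_sub h two_ne_zero]
  norm_num
  rw [← integral_add_adjacent_intervals (hsub (-1) (by norm_num) 0 (by norm_num))
    (hsub 0 (by norm_num) 1 (by norm_num)), hneg]
  ring

lemma one_add_mul_one_sub_sq_pos {t z : ℝ} (ht : 0 ≤ t) (hz : z ∈ Icc (-1 : ℝ) 1) :
    0 < 1 + t * (1 - z ^ 2) / 4 := by
  have : z ^ 2 ≤ 1 := by nlinarith [hz.1, hz.2]
  have : 0 ≤ t * (1 - z ^ 2) := mul_nonneg ht (by linarith)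
  linarith

lemma polarizationIntegral_eq_integral_log (t : ℝ) (ht : 0 ≤ t) :
    polarizationIntegral t =
      ∫ z in (0 : ℝ)..1, log (1 + t * (1 - z ^ 2) / 4) * ((1 - z ^ 2) / 4) := by
  have hcont : ContinuousOn (fun z : ℝ ↦ log (1 + t * (1 - z ^ 2) / 4) * ((1 - z ^ 2) / 4))
      (uIcc (-1) 1) := by
    rw [uIcc_of_le (by norm_num)]
    exact ((by fun_prop : Continuous fun z : ℝ ↦ 1 + t * (1 - z ^ 2) / 4).continuousOn.log
      fun z hz ↦ (one_add_mul_one_sub_sq_pos ht hz).ne').mul (by fun_prop)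
  rw [polarizationIntegral, setIntegral_Ioo_eq_intervalIntegral zero_le_one,
    ← integral_comp_two_mul_sub_one_of_even (fun z ↦ by simp only [even_two.neg_pow])
      hcont.intervalIntegrable]
  congr 1
  ext u
  ring_nf

lemma integral_log_mul_one_sub_sq (t : ℝ) (ht : 0 ≤ t) :
    ∫ z in (0 : ℝ)..1, log (1 + t * (1 - z ^ 2) / 4) * ((1 - z ^ 2) / 4) =
      t / 8 * ∫ z in (0 : ℝ)..1, (z ^ 2 - z ^ 4 / 3) / (1 + t * (1 - z ^ 2) / 4) := by
  have hpos : ∀ z ∈ uIcc (0 : ℝ) 1, 0 < 1 + t * (1 - z ^ 2) / 4 := fun z hz ↦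
    one_add_mul_one_sub_sq_pos ht (Icc_subset_Icc (by norm_num : (-1 : ℝ) ≤ 0) le_rfl
      (by rwa [uIcc_of_le zero_le_one] at hz))
  have hu : ∀ z ∈ uIcc (0 : ℝ) 1, HasDerivAt (fun z ↦ log (1 + t * (1 - z ^ 2) / 4))
      (-(t * z / 2) / (1 + t * (1 - z ^ 2) / 4)) z := fun z hz ↦ by
    have hD : HasDerivAt (fun z : ℝ ↦ 1 + t * (1 - z ^ 2) / 4) (-(t * z / 2)) z := by
      refine ((((hasDerivAt_pow 2 z).const_sub 1).const_mul t).div_const 4).const_add 1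
        |>.congr_deriv ?_
      push_cast
      ring
    exact hD.log (hpos z hz).ne'
  have hv : ∀ z ∈ uIcc (0 : ℝ) 1,
      HasDerivAt (fun z : ℝ ↦ (z - z ^ 3 / 3) / 4) ((1 - z ^ 2) / 4) z := fun z _ ↦ by
    refine ((hasDerivAt_id z).sub ((hasDerivAt_pow 3 z).div_const 3)).div_const 4
      |>.congr_deriv ?_
    push_cast
    ring
  have hu' : IntervalIntegrable (fun z ↦ -(t * z / 2) / (1 + t * (1 - z ^ 2) / 4)) volume 0 1 :=
    ContinuousOn.intervalIntegrable <|
      (by fun_prop : Continuous fun z : ℝ ↦ -(t * z / 2)).continuousOn.div (by fun_prop)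
        fun z hz ↦ (hpos z hz).ne'
  rw [integral_mul_deriv_eq_deriv_mul hu hv hu'
    ((by fun_prop : Continuous fun z : ℝ ↦ (1 - z ^ 2) / 4).intervalIntegrable 0 1),
    ← intervalIntegral.integral_const_mul]
  norm_num
  rw [← intervalIntegral.integral_neg, ← intervalIntegral.integral_const_mul]
  refine integral_congr fun z _ ↦ ?_
  ring

lemma polarizationIntegral_eq (t : ℝ) (ht : 0 ≤ t) :
    polarizationIntegral t =
      t / 8 * ∫ z in Ioo (0 : ℝ) 1, (z ^ 2 - z ^ 4 / 3) / (1 + t * (1 - z ^ 2) / 4) := by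
  rw [polarizationIntegral_eq_integral_log t ht, integral_log_mul_one_sub_sq t ht,
    setIntegral_Ioo_eq_intervalIntegral zero_le_one]

lemma cutoff_sub_vacuumMultiplier_eq {t c₁ c₂ m₁ m₂ L : ℝ} (ht : 0 ≤ t) (hm₁ : m₁ ≠ 0)
    (hm₂ : m₂ ≠ 0)
    (hL : log (L ^ 2) = -(1 * log (1 ^ 2) + c₁ * log (m₁ ^ 2) + c₂ * log (m₂ ^ 2))) :
    2 / (3 * π) * log L -
        (-(2 / π) * ∫ u in Ioo (0 : ℝ) 1,
          (1 * log (1 ^ 2 + u * (1 - u) * t) + c₁ * log (m₁ ^ 2 + u * (1 - u) * t) +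
            c₂ * log (m₂ ^ 2 + u * (1 - u) * t)) * (u * (1 - u))) =
      2 / π * polarizationIntegral t +
        2 / π * (c₁ * polarizationIntegral (t / m₁ ^ 2) +
          c₂ * polarizationIntegral (t / m₂ ^ 2)) := by
  have hint : ∀ a : ℝ, 0 < a →
      IntegrableOn (fun u : ℝ ↦ log (a + u * (1 - u) * t) * (u * (1 - u))) (Ioo 0 1) :=
    fun a ha ↦ integrableOn_log_add_mul ha ht
  have hexpand : ∀ u : ℝ,
      (1 * log (1 ^ 2 + u * (1 - u) * t) + c₁ * log (m₁ ^ 2 + u * (1 - u) * t) +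
        c₂ * log (m₂ ^ 2 + u * (1 - u) * t)) * (u * (1 - u)) =
      log (1 ^ 2 + u * (1 - u) * t) * (u * (1 - u)) +
        c₁ * (log (m₁ ^ 2 + u * (1 - u) * t) * (u * (1 - u))) +
        c₂ * (log (m₂ ^ 2 + u * (1 - u) * t) * (u * (1 - u))) := fun u ↦ by ring
  simp_rw [hexpand]
  rw [integral_add (Integrable.fun_add (hint _ (by positivity))
      ((hint _ (by positivity)).const_mul _)) ((hint _ (by positivity)).const_mul _),
    integral_add (hint _ (by positivity)) ((hint _ (by positivity)).const_mul _),
    MeasureTheory.integral_const_mul, MeasureTheory.integral_const_mul,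
    integral_log_add_mul_eq (by positivity) ht, integral_log_add_mul_eq (by positivity) ht,
    integral_log_add_mul_eq (by positivity) ht]
  simp only [one_pow, log_one, div_one, log_pow] at hL ⊢
  linear_combination (1 / (3 * π)) * hL

theorem stmt16_general (k : EuclideanSpace ℝ (Fin 3)) (m₁ m₂ c₁ c₂ Λ : ℕ → ℝ)
    (hm : ∀ n, 1 < m₁ n ∧ m₁ n < m₂ n)
    (hm₁ : Filter.Tendsto m₁ Filter.atTop Filter.atTop)
    (hbdd : ∃ C : ℝ, ∀ n, |c₁ n| + |c₂ n| ≤ C)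
    (hΛ : ∀ n, Real.log ((Λ n) ^ 2) =
      -((1 : ℝ) * Real.log ((1 : ℝ) ^ 2) + c₁ n * Real.log ((m₁ n) ^ 2) +
        c₂ n * Real.log ((m₂ n) ^ 2))) :
    Filter.Tendsto (fun n =>
        2 / (3 * Real.pi) * Real.log (Λ n) -
          (-(2 / Real.pi) * ∫ u in Set.Ioo (0 : ℝ) 1,
            ((1 : ℝ) * Real.log ((1 : ℝ) ^ 2 + u * (1 - u) * ‖k‖ ^ 2) +
              c₁ n * Real.log ((m₁ n) ^ 2 + u * (1 - u) * ‖k‖ ^ 2) +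
              c₂ n * Real.log ((m₂ n) ^ 2 + u * (1 - u) * ‖k‖ ^ 2)) * (u * (1 - u))))
      Filter.atTop
      (nhds (‖k‖ ^ 2 / (4 * Real.pi) *
        ∫ z in Set.Ioo (0 : ℝ) 1,
          (z ^ 2 - z ^ 4 / 3) / (1 + ‖k‖ ^ 2 * (1 - z ^ 2) / 4))) := by
  obtain ⟨C, hC⟩ := hbdd
  have ht : 0 ≤ ‖k‖ ^ 2 := by positivity
  have hm₂ : Tendsto m₂ atTop atTop := tendsto_atTop_mono (fun n ↦ (hm n).2.le) hm₁
  have hrem : Tendsto (fun n ↦ c₁ n * polarizationIntegral (‖k‖ ^ 2 / m₁ n ^ 2) +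
      c₂ n * polarizationIntegral (‖k‖ ^ 2 / m₂ n ^ 2)) atTop (𝓝 0) := by
    simpa using (bdd_le_mul_tendsto_zero' C
        (.of_forall fun n ↦ (le_add_of_nonneg_right (abs_nonneg _)).trans (hC n))
        (tendsto_polarizationIntegral_div_sq hm₁ _ ht)).add
      (bdd_le_mul_tendsto_zero' C
        (.of_forall fun n ↦ (le_add_of_nonneg_left (abs_nonneg _)).trans (hC n))
        (tendsto_polarizationIntegral_div_sq hm₂ _ ht))
  have hlim := tendsto_const_nhds (x := 2 / π * polarizationIntegral (‖k‖ ^ 2)) |>.add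
    (hrem.const_mul (2 / π))
  have hm₁pos : ∀ n, 0 < m₁ n := fun n ↦ zero_lt_one.trans (hm n).1
  convert hlim.congr fun n ↦ (cutoff_sub_vacuumMultiplier_eq ht (hm₁pos n).ne'
    ((hm₁pos n).trans (hm n).2).ne' (hΛ n)).symm using 2
  rw [polarizationIntegral_eq _ ht]
  ring

/-- Serber–Uehling limit: with `m₀ = 1`, `c₀ = 1`, Pauli–Villars masses `1 < m₁⁽ⁿ⁾ < m₂⁽ⁿ⁾`
with `m₁⁽ⁿ⁾ → ∞`, coefficients `c₁⁽ⁿ⁾, c₂⁽ⁿ⁾` given by the Pauli–Villars conditions and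
uniformly bounded, multiplier `M⁰_n(k)` and averaged cut-off `Λ_n` defined by
`log Λ_n² = −Σⱼ cⱼ⁽ⁿ⁾ log (mⱼ⁽ⁿ⁾)²`, one has
`(2/(3π)) log Λ_n − M⁰_n(k) → U(k)`. -/
theorem stmt16 (k : EuclideanSpace ℝ (Fin 3)) (m₁ m₂ c₁ c₂ Λ : ℕ → ℝ)
    (hm : ∀ n, 1 < m₁ n ∧ m₁ n < m₂ n)
    (hm₁ : Filter.Tendsto m₁ Filter.atTop Filter.atTop)
    (hc₁ : ∀ n, c₁ n = (1 - (m₂ n) ^ 2) / ((m₂ n) ^ 2 - (m₁ n) ^ 2))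
    (hc₂ : ∀ n, c₂ n = ((m₁ n) ^ 2 - 1) / ((m₂ n) ^ 2 - (m₁ n) ^ 2))
    (hbdd : ∃ C : ℝ, ∀ n, |c₁ n| + |c₂ n| ≤ C)
    (hΛpos : ∀ n, 0 < Λ n)
    (hΛ : ∀ n, Real.log ((Λ n) ^ 2) =
      -((1 : ℝ) * Real.log ((1 : ℝ) ^ 2) + c₁ n * Real.log ((m₁ n) ^ 2) +
        c₂ n * Real.log ((m₂ n) ^ 2))) :
    Filter.Tendsto (fun n =>
        2 / (3 * Real.pi) * Real.log (Λ n) -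
          (-(2 / Real.pi) * ∫ u in Set.Ioo (0 : ℝ) 1,
            ((1 : ℝ) * Real.log ((1 : ℝ) ^ 2 + u * (1 - u) * ‖k‖ ^ 2) +
              c₁ n * Real.log ((m₁ n) ^ 2 + u * (1 - u) * ‖k‖ ^ 2) +
              c₂ n * Real.log ((m₂ n) ^ 2 + u * (1 - u) * ‖k‖ ^ 2)) * (u * (1 - u))))
      Filter.atTop
      (nhds (‖k‖ ^ 2 / (4 * Real.pi) *
        ∫ z in Set.Ioo (0 : ℝ) 1,
          (z ^ 2 - z ^ 4 / 3) / (1 + ‖k‖ ^ 2 * (1 - z ^ 2) / 4))) :=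
  stmt16_general k m₁ m₂ c₁ c₂ Λ hm hm₁ hbdd hΛ
end
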